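/- Let T^π_k be the k-persistent Bellman expectation operator and T*_k the k-persistent Bellman optimal operator on a finite MDP, and suppose π^* is greedy w.r.t. Q*_k (the fixed point of T*_k) while π^(J) is greedy w.r.t. Q^(J). Then Q*_k − Q_k^{π^(J)} ≤ γ^k (Id − γ^k P_k^{π^(J)})^{-1} (P_k^{π*_k} − P_k^{π^(J)}) (Q*_k − Q^(J)) pointwise, where Q_k^{π^(J)} is the fixed point of T_k^{π^(J)}. -/

import Mathlib

/-!
Subtracting the fixed-point equations of `Q*_k` and `Q_k^{π_J}`, and using that `π_J` is greedy
for `Q^(J)`, gives `Δ ≤ γ^k e + γ^k P^{π_J} Δ` for `Δ = Q*_k - Q_k^{π_J}` and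
`e = (P^{π*} - P^{π_J}) (Q*_k - Q^(J))`. As `P^{π_J}` is positive and nonexpansive in the sup
norm, unrolling this inequality `n` times leaves a remainder `γ^{kn} (P^{π_J})^n Δ` that tends to
`0`, so `Δ` is bounded by the Neumann series.
-/

open Finset Filter Topology

section Comparison

variable {E : Type*} [NormedAddCommGroup E] [NormedSpace ℝ E] (L : Module.End ℝ E) {c : ℝ}

theorem Module.End.norm_pow_apply_le (hL : ∀ x, ‖L x‖ ≤ ‖x‖) (n : ℕ) (x : E) :
    ‖(L ^ n) x‖ ≤ ‖x‖ := by
  induction n with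
  | zero => simp
  | succ n ih => rw [pow_succ', Module.End.mul_apply]; exact (hL _).trans ih

variable [PartialOrder E] [IsOrderedAddMonoid E] [PosSMulMono ℝ E]

theorem le_sum_range_add_of_le_add_smul (hL : Monotone L) (hc : 0 ≤ c) {b d : E}
    (h : d ≤ b + c • L d) (n : ℕ) :
    d ≤ ∑ m ∈ range n, c ^ m • (L ^ m) b + c ^ n • (L ^ n) d := by
  induction n with
  | zero => simp
  | succ n ih =>
    have hmono : Monotone (L ^ n) := Module.End.coe_pow L n ▸ hL.iterate n
    calc d ≤ ∑ m ∈ range n, c ^ m • (L ^ m) b + c ^ n • (L ^ n) d := ih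
      _ ≤ ∑ m ∈ range n, c ^ m • (L ^ m) b + c ^ n • (L ^ n) (b + c • L d) := by
        gcongr
        exact hmono h
      _ = ∑ m ∈ range (n + 1), c ^ m • (L ^ m) b + c ^ (n + 1) • (L ^ (n + 1)) d := by
        rw [sum_range_succ, map_add, map_smul, pow_succ L, Module.End.mul_apply, smul_add,
          smul_smul, ← pow_succ, add_assoc]

variable [CompleteSpace E] [OrderClosedTopology E]

theorem le_tsum_of_le_add_smul (hL : Monotone L) (hLn : ∀ x, ‖L x‖ ≤ ‖x‖) (hc0 : 0 ≤ c)
    (hc1 : c < 1) {b d : E} (h : d ≤ b + c • L d) :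
    d ≤ ∑' m : ℕ, c ^ m • (L ^ m) b := by
  have hnorm : ∀ (m : ℕ) x, ‖c ^ m • (L ^ m) x‖ ≤ ‖x‖ * c ^ m := fun m x => by
    rw [norm_smul, Real.norm_of_nonneg (pow_nonneg hc0 m), mul_comm]
    exact mul_le_mul_of_nonneg_right (L.norm_pow_apply_le hLn m x) (pow_nonneg hc0 m)
  have hsum : Summable fun m : ℕ => c ^ m • (L ^ m) b :=
    .of_norm_bounded ((summable_geometric_of_lt_one hc0 hc1).mul_left ‖b‖) (hnorm · b)
  have hrem : Tendsto (fun n : ℕ => c ^ n • (L ^ n) d) atTop (𝓝 0) := by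
    refine squeeze_zero_norm (hnorm · d) ?_
    simpa using (tendsto_pow_atTop_nhds_zero_of_lt_one hc0 hc1).const_mul ‖d‖
  refine ge_of_tendsto' (x := atTop) ?_ (le_sum_range_add_of_le_add_smul L hL hc0 h)
  simpa using hsum.hasSum.tendsto_sum_nat.add hrem

end Comparison

section PolicyTransition

variable {S A : Type*} [Fintype S] (Pk : S → A → S → ℝ)

/-- The paper's `P^p_k`, acting on state-action value functions. -/
def policyTransition (p : S → A) : Module.End ℝ (S × A → ℝ) where
  toFun f sa := ∑ s', Pk sa.1 sa.2 s' * f (s', p s')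
  map_add' f g := by ext; simp [mul_add, sum_add_distrib]
  map_smul' c f := by ext; simp [mul_sum, mul_left_comm]

@[simp]
theorem policyTransition_apply (p : S → A) (f : S × A → ℝ) (sa : S × A) :
    policyTransition Pk p f sa = ∑ s', Pk sa.1 sa.2 s' * f (s', p s') := rfl

variable {Pk}

theorem policyTransition_le_of_greedy (hP0 : ∀ s a s', 0 ≤ Pk s a s') {f : S × A → ℝ}
    {p : S → A} (hp : ∀ s a, f (s, a) ≤ f (s, p s)) (q : S → A) :
    policyTransition Pk q f ≤ policyTransition Pk p f := fun _ =>
  sum_le_sum fun _ _ => mul_le_mul_of_nonneg_left (hp _ _) (hP0 _ _ _)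

theorem monotone_policyTransition (hP0 : ∀ s a s', 0 ≤ Pk s a s') (p : S → A) :
    Monotone (policyTransition Pk p) :=
  fun _ _ hfg _ => sum_le_sum fun _ _ => mul_le_mul_of_nonneg_left (hfg _) (hP0 _ _ _)

theorem norm_policyTransition_apply_le [Fintype A] (hP0 : ∀ s a s', 0 ≤ Pk s a s')
    (hP1 : ∀ s a, ∑ s', Pk s a s' = 1) (p : S → A) (f : S × A → ℝ) :
    ‖policyTransition Pk p f‖ ≤ ‖f‖ := by
  refine (pi_norm_le_iff_of_nonneg (norm_nonneg f)).2 fun sa => ?_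
  calc ‖∑ s', Pk sa.1 sa.2 s' * f (s', p s')‖
      ≤ ∑ s', Pk sa.1 sa.2 s' * ‖f‖ := by
        refine (norm_sum_le _ _).trans (sum_le_sum fun s' _ => ?_)
        rw [norm_mul, Real.norm_of_nonneg (hP0 _ _ _)]
        exact mul_le_mul_of_nonneg_left (norm_le_pi_norm f _) (hP0 _ _ _)
    _ = ‖f‖ := by rw [← sum_mul, hP1, one_mul]

end PolicyTransition

theorem stmt_17 {S A : Type*} [Fintype S] [Fintype A] [Nonempty A]
    (Pk : S → A → S → ℝ)
    (hP0 : ∀ s a s', 0 ≤ Pk s a s') (hP1 : ∀ s a, ∑ s', Pk s a s' = 1)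
    (rk : S × A → ℝ) (γ : ℝ) (hγ0 : 0 ≤ γ) (hγ1 : γ < 1)
    (k : ℕ) (hk : 1 ≤ k)
    (Pop : (S → A) → (S × A → ℝ) → (S × A → ℝ))
    (hPop : ∀ p f sa, Pop p f sa = ∑ s', Pk sa.1 sa.2 s' * f (s', p s'))
    (Tk : (S → A) → (S × A → ℝ) → (S × A → ℝ))
    (hTk : ∀ p f, Tk p f = rk + γ ^ k • Pop p f)
    (Tstark : (S × A → ℝ) → (S × A → ℝ))
    (hTstark : ∀ f sa, Tstark f sa =
      rk sa + γ ^ k * ∑ s', Pk sa.1 sa.2 s' *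
        (Finset.univ.sup' Finset.univ_nonempty fun a' => f (s', a')))
    (Qstark : S × A → ℝ) (hQstark : Tstark Qstark = Qstark)
    (πstar : S → A) (hπstar : ∀ s a, Qstark (s, a) ≤ Qstark (s, πstar s))
    (QJ : S × A → ℝ) (πJ : S → A) (hπJ : ∀ s a, QJ (s, a) ≤ QJ (s, πJ s))
    (QkπJ : S × A → ℝ) (hQkπJ : Tk πJ QkπJ = QkπJ) :
    ∀ x : S × A,
      Qstark x - QkπJ x ≤
        γ ^ k * (∑' m : ℕ, γ ^ (k * m) •
          (Pop πJ)^[m] (Pop πstar (Qstark - QJ) - Pop πJ (Qstark - QJ))) x := by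
  obtain rfl : Pop = fun p => ⇑(policyTransition Pk p) :=
    funext fun p => funext fun f => funext (hPop p f)
  set P := policyTransition Pk
  set c := γ ^ k
  set e := P πstar (Qstark - QJ) - P πJ (Qstark - QJ)
  have hQstar : Qstark = rk + c • P πstar Qstark := by
    conv_lhs => rw [← hQstark]
    ext sa
    simp only [hTstark, Pi.add_apply, Pi.smul_apply, smul_eq_mul, P, policyTransition_apply]
    congr 3 with s'
    exact congrArg _ <| le_antisymm (sup'_le _ _ fun a _ => hπstar s' a)
      (le_sup' (fun a => Qstark (s', a)) (mem_univ _))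
  have hQJ : QkπJ = rk + c • P πJ QkπJ := by rw [← hTk, hQkπJ]
  have hstep : Qstark - QkπJ ≤ c • e + c • P πJ (Qstark - QkπJ) := by
    have hgreedy : P πstar QJ ≤ P πJ QJ := policyTransition_le_of_greedy hP0 hπJ πstar
    have hc0 : 0 ≤ c := pow_nonneg hγ0 k
    calc Qstark - QkπJ = c • (P πstar Qstark - P πJ QkπJ) := by
          nth_rewrite 1 [hQstar, hQJ]; rw [smul_sub]; abel
      _ ≤ c • (e + P πJ (Qstark - QkπJ)) := by
          gcongr
          intro sa
          simp only [e, map_sub, Pi.sub_apply, Pi.add_apply]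
          linarith [hgreedy sa]
      _ = c • e + c • P πJ (Qstark - QkπJ) := smul_add _ _ _
  have hbound := le_tsum_of_le_add_smul (P πJ) (monotone_policyTransition hP0 πJ)
    (norm_policyTransition_apply_le hP0 hP1 πJ) (pow_nonneg hγ0 k)
    (pow_lt_one₀ hγ0 hγ1 (by omega)) hstep
  intro x
  simpa [map_smul, smul_comm _ c, tsum_const_smul'', pow_mul, Module.End.coe_pow] using hbound x
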